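/- Let G be a finite simple graph with edge-connectivity λ, let k ≥ 4, and let X₁, …, X_k be nonempty sets partitioning V(G) such that for every cyclically consecutive run X_i ∪ X_{i+1} ∪ … ∪ X_j (indices mod k) that is a nonempty proper subset of V(G), this union X has d(X) = λ. Then d(X_i, X_{i+1 mod k}) = λ/2 for every i, and d(X_i, X_j) = 0 whenever X_i and X_j are not cyclically adjacent (i.e., j ≢ i ± 1 mod k). -/

import Mathlib

open scoped Classical

/-- `d(X)`: the number of edges of `G` with exactly one endpoint in `X`.
Each crossing edge `uv` (with `u ∈ X`, `v ∉ X`) is counted once, as the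
ordered pair `(u, v)`. -/
noncomputable def cutSize {V : Type*} [Fintype V] (G : SimpleGraph V)
    (X : Finset V) : ℕ :=
  (Finset.univ.filter fun p : V × V => p.1 ∈ X ∧ p.2 ∉ X ∧ G.Adj p.1 p.2).card

/-- `lam` is the edge-connectivity of `G`: the minimum of `d(X)` over all
`∅ ≠ X ⊊ V`. -/
def IsEdgeConn {V : Type*} [Fintype V] (G : SimpleGraph V) (lam : ℕ) : Prop :=
  (∀ X : Finset V, X.Nonempty → X ≠ Finset.univ → lam ≤ cutSize G X) ∧
  ∃ X : Finset V, X.Nonempty ∧ X ≠ Finset.univ ∧ cutSize G X = lam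

/-- `X` is a min-cut of `G` (whose edge-connectivity is `lam`). -/
def IsMinCut {V : Type*} [Fintype V] (G : SimpleGraph V) (lam : ℕ)
    (X : Finset V) : Prop :=
  X.Nonempty ∧ X ≠ Finset.univ ∧ cutSize G X = lam

/-- `X` is a non-trivial min-cut: a min-cut with `2 ≤ |X| ≤ |V| - 2`. -/
def IsNontrivialMinCut {V : Type*} [Fintype V] (G : SimpleGraph V) (lam : ℕ)
    (X : Finset V) : Prop :=
  IsMinCut G lam X ∧ 2 ≤ X.card ∧ X.card ≤ Fintype.card V - 2

/-- `d(X,Y)`: for disjoint `X`, `Y`, the number of edges of `G` with one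
endpoint in `X` and one endpoint in `Y`. -/
noncomputable def crossCount {V : Type*} [Fintype V] (G : SimpleGraph V)
    (X Y : Finset V) : ℕ :=
  (Finset.univ.filter fun p : V × V => p.1 ∈ X ∧ p.2 ∈ Y ∧ G.Adj p.1 p.2).card

/-! For disjoint `A`, `B` one has `d(A) + d(B) = d(A ∪ B) + 2 d(A, B)`. If `R` is a cyclic run and
`X` the next part, all three cuts `R`, `X`, `R ∪ X` are runs, so `d(R, X) = λ/2`. For `R = Xᵢ` this
is the claim on neighbours; for a longer run the last part of `R` is a neighbour of `X` and already
accounts for all `λ/2` edges, so the earlier parts, `Xᵢ` among them, send no edge to `X`. -/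

open Finset Function

section CutCounts

variable {V : Type*} [Fintype V] (G : SimpleGraph V)

theorem crossCount_comm (A B : Finset V) : crossCount G A B = crossCount G B A := by
  unfold crossCount
  refine card_bij' (fun p _ => p.swap) (fun p _ => p.swap) ?_ ?_ ?_ ?_ <;>
    simp +contextual [SimpleGraph.adj_comm]

theorem crossCount_union_right {B C : Finset V} (h : Disjoint B C) (A : Finset V) :
    crossCount G A (B ∪ C) = crossCount G A B + crossCount G A C := by
  unfold crossCount
  rw [← card_union_of_disjoint, ← filter_or]
  · congr 1; ext p; simp only [mem_filter, mem_union]; tauto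
  · exact disjoint_filter.mpr fun p _ hB hC => disjoint_left.mp h hB.2.1 hC.2.1

theorem crossCount_union_left {A B : Finset V} (h : Disjoint A B) (C : Finset V) :
    crossCount G (A ∪ B) C = crossCount G A C + crossCount G B C := by
  simp only [crossCount_comm G _ C, crossCount_union_right G h]

theorem crossCount_mono_left {A B : Finset V} (h : A ⊆ B) (C : Finset V) :
    crossCount G A C ≤ crossCount G B C :=
  card_le_card <| monotone_filter_right _ fun _ _ hp => ⟨h hp.1, hp.2⟩

theorem cutSize_eq_crossCount_compl (A : Finset V) : cutSize G A = crossCount G A Aᶜ := by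
  simp [cutSize, crossCount]

/-- Edges between `A` and `B` are cut by both `A` and `B` but not by `A ∪ B`. -/
theorem cutSize_add_cutSize {A B : Finset V} (h : Disjoint A B) :
    cutSize G A + cutSize G B = cutSize G (A ∪ B) + 2 * crossCount G A B := by
  set W := (A ∪ B)ᶜ
  have hAB : ∀ v, v ∈ A → v ∉ B := fun _ hv => disjoint_left.mp h hv
  have hA : Aᶜ = B ∪ W := by
    ext v; have := hAB v; simp only [mem_compl, mem_union, W]; tauto
  have hB : Bᶜ = A ∪ W := by
    ext v; have := hAB v; simp only [mem_compl, mem_union, W]; tauto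
  have hBW : Disjoint B W := disjoint_compl_right.mono_left subset_union_right
  have hAW : Disjoint A W := disjoint_compl_right.mono_left subset_union_left
  rw [cutSize_eq_crossCount_compl, cutSize_eq_crossCount_compl, cutSize_eq_crossCount_compl,
    hA, hB, crossCount_union_right G hBW, crossCount_union_right G hAW,
    crossCount_union_left G h, crossCount_comm G B A]
  ring

end CutCounts

theorem ZMod.exists_eq_add_natCast_of_ne {k : ℕ} [NeZero k] {i j : ZMod k} (h₀ : j ≠ i)
    (h₁ : j ≠ i + 1) (h₂ : j ≠ i - 1) : ∃ m : ℕ, m + 3 < k ∧ j = i + ((m + 2 : ℕ) : ZMod k) := by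
  set l := (j - i).val
  have hj : j = i + (l : ZMod k) := by rw [ZMod.natCast_zmod_val]; ring
  have hl : l < k := ZMod.val_lt _
  have hl₀ : l ≠ 0 := fun h => h₀ (by rw [hj, h]; simp)
  have hl₁ : l ≠ 1 := fun h => h₁ (by rw [hj, h]; simp)
  have hl₂ : l ≠ k - 1 := fun h => h₂ (by
    rw [hj, h, Nat.cast_sub (by omega), ZMod.natCast_self]; push_cast; ring)
  exact ⟨l - 2, by omega, by rw [hj]; congr 2; omega⟩

section CyclicRuns

variable {V : Type*} {k : ℕ}

noncomputable def cyclicRun (X : ZMod k → Finset V) (i : ZMod k) (l : ℕ) : Finset V :=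
  (range l).sup fun t => X (i + t)

variable {X : ZMod k → Finset V}

theorem cyclicRun_one (i : ZMod k) : cyclicRun X i 1 = X i := by
  simp [cyclicRun]

theorem cyclicRun_succ (i : ZMod k) (l : ℕ) :
    cyclicRun X i (l + 1) = cyclicRun X i l ∪ X (i + l) := by
  rw [cyclicRun, range_add_one, sup_insert, sup_eq_union, union_comm, cyclicRun]

theorem subset_cyclicRun (i : ZMod k) {l : ℕ} (hl : 0 < l) :
    X i ⊆ cyclicRun X i l :=
  fun _ hv => mem_sup.mpr ⟨0, mem_range.mpr hl, by simpa using hv⟩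

theorem disjoint_cyclicRun (hX : Pairwise (Disjoint on X)) (i : ZMod k) {l : ℕ} (hl : l < k) :
    Disjoint (cyclicRun X i l) (X (i + l)) := by
  refine Finset.disjoint_sup_left.mpr fun t ht => hX fun h => ?_
  have := congrArg ZMod.val (add_left_cancel h)
  rw [ZMod.val_cast_of_lt (by simp at ht; omega), ZMod.val_cast_of_lt hl] at this
  simp at ht; omega

variable [Fintype V] {G : SimpleGraph V} {lam : ℕ}

theorem two_mul_crossCount_cyclicRun (hX : Pairwise (Disjoint on X))
    (hruns : ∀ (i : ZMod k) (l : ℕ), 1 ≤ l → l < k → cutSize G (cyclicRun X i l) = lam)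
    (i : ZMod k) {l : ℕ} (hl : 1 ≤ l) (hlk : l + 1 < k) :
    2 * crossCount G (cyclicRun X i l) (X (i + l)) = lam := by
  have h := cutSize_add_cutSize G (disjoint_cyclicRun hX i (l := l) (by omega))
  rw [← cyclicRun_succ, hruns i l hl (by omega), hruns i (l + 1) (by omega) hlk] at h
  have hcutX : cutSize G (X (i + l)) = lam := by
    simpa [cyclicRun_one] using hruns (i + l) 1 le_rfl (by omega)
  omega

theorem two_mul_crossCount_add_one (hX : Pairwise (Disjoint on X))
    (hruns : ∀ (i : ZMod k) (l : ℕ), 1 ≤ l → l < k → cutSize G (cyclicRun X i l) = lam)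
    (hk : 3 ≤ k) (i : ZMod k) :
    2 * crossCount G (X i) (X (i + 1)) = lam := by
  simpa [cyclicRun_one] using two_mul_crossCount_cyclicRun hX hruns i le_rfl hk

theorem crossCount_add_natCast_eq_zero (hX : Pairwise (Disjoint on X))
    (hruns : ∀ (i : ZMod k) (l : ℕ), 1 ≤ l → l < k → cutSize G (cyclicRun X i l) = lam)
    (i : ZMod k) {m : ℕ} (hm : m + 3 < k) :
    crossCount G (X i) (X (i + (m + 2 : ℕ))) = 0 := by
  have hrun := two_mul_crossCount_cyclicRun hX hruns i (l := m + 2) (by omega) (by omega)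
  have hlast := two_mul_crossCount_add_one hX hruns (by omega) (i + (m + 1 : ℕ))
  rw [show i + (m + 1 : ℕ) + 1 = i + (m + 2 : ℕ) by push_cast; ring] at hlast
  rw [cyclicRun_succ, crossCount_union_left G (disjoint_cyclicRun hX i (by omega))] at hrun
  have hrest : crossCount G (cyclicRun X i (m + 1)) (X (i + (m + 2 : ℕ))) = 0 := by omega
  exact Nat.eq_zero_of_le_zero <|
    hrest ▸ crossCount_mono_left G (subset_cyclicRun i (by omega)) _

end CyclicRuns

theorem statement5_general (V : Type) [Fintype V] (G : SimpleGraph V) (lam k : ℕ)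
    (hk : 4 ≤ k)
    (X : ZMod k → Finset V)
    (hpart : ∀ v : V, ∃! i : ZMod k, v ∈ X i)
    (hruns : ∀ (i : ZMod k) (l : ℕ), 1 ≤ l → l < k →
      cutSize G ((Finset.range l).sup fun t => X (i + (t : ZMod k))) = lam) :
    (∀ i : ZMod k, 2 * crossCount G (X i) (X (i + 1)) = lam) ∧
    (∀ i j : ZMod k, i ≠ j → j ≠ i + 1 → j ≠ i - 1 →
      crossCount G (X i) (X j) = 0) := by
  have : NeZero k := ⟨by omega⟩
  have hX : Pairwise (Disjoint on X) := fun i j hij =>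
    disjoint_left.mpr fun v hi hj => hij ((hpart v).unique hi hj)
  refine ⟨two_mul_crossCount_add_one hX hruns (by omega), fun i j h₀ h₁ h₂ => ?_⟩
  obtain ⟨m, hm, rfl⟩ := ZMod.exists_eq_add_natCast_of_ne (Ne.symm h₀) h₁ h₂
  exact crossCount_add_natCast_eq_zero hX hruns i hm

/-- Let `G` be a finite simple graph with edge-connectivity
`λ`, let `k ≥ 4`, and let `X₀, …, X_{k-1}` (indexed by `ZMod k`) be nonempty
sets partitioning `V(G)` such that every cyclically consecutive run
`X_i ∪ X_{i+1} ∪ … ∪ X_{i+l-1}` (for `1 ≤ l < k`, hence a nonempty proper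
subset of `V(G)`) has `d = λ`. Then `d(X_i, X_{i+1}) = λ/2` for every `i`
(stated as `2·d(X_i, X_{i+1}) = λ`), and `d(X_i, X_j) = 0` whenever `X_i` and
`X_j` are not cyclically adjacent. -/
theorem statement5 (V : Type) [Fintype V] (G : SimpleGraph V) (lam k : ℕ)
    (hk : 4 ≤ k)
    (hconn : IsEdgeConn G lam)
    (X : ZMod k → Finset V)
    (hne : ∀ i, (X i).Nonempty)
    (hpart : ∀ v : V, ∃! i : ZMod k, v ∈ X i)
    (hruns : ∀ (i : ZMod k) (l : ℕ), 1 ≤ l → l < k →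
      cutSize G ((Finset.range l).sup fun t => X (i + (t : ZMod k))) = lam) :
    (∀ i : ZMod k, 2 * crossCount G (X i) (X (i + 1)) = lam) ∧
    (∀ i j : ZMod k, i ≠ j → j ≠ i + 1 → j ≠ i - 1 →
      crossCount G (X i) (X j) = 0) :=
  statement5_general V G lam k hk X hpart hruns
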